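/- arXiv:2505.00138 — 8 statements merged into one kernel-verified Lean document; each statement's English description precedes it below -/
import Mathlib

section
/- Let (Ω, ℙ) be a probability space, let (h_i)_{i∈ℕ} be nonnegative measurable random variables (fading powers), let (x_i)_{i∈ℕ} be points of the Euclidean plane, and let y be a point of the plane with y ≠ x_i for every i. Write r_i = dist(y, x_i), and let α > 0, θ > 0, u ∈ (0,1). Assume that for every ω ∈ Ω the interference series ∑_{i≥1} h_i(ω)·r_i^{−α} is summable. If y is covered, i.e. ℙ( h_0·r_0^{−α} > θ·∑_{i≥1} h_i·r_i^{−α} ) > u, then for every index j ≥ 1 and every real s with ℙ(h_0 ≤ s·h_j) ≥ 1 − u one has θ·r_0^α < s·r_j^α; in particular, for every such s > 0, r_j > (θ/s)^{1/α}·r_0, i.e. y lies in the Q cell of x_0 with distance-ratio parameter ρ = (θ/s)^{1/α}. -/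
open MeasureTheory

/-- Coverage outer bound via Q cells: if a location `y` is covered with QoS parameters
`(θ, u)`, then for every interferer `x j` (`j ≥ 1`) and every `s` with
`ℙ(h₀ ≤ s·h_j) ≥ 1 − u`, one has `θ·r₀^α < s·r_j^α`; in particular, for such `s > 0`,
`r_j > (θ/s)^(1/α)·r₀`, i.e. `y` lies in the Q cell of `x 0` with `ρ = (θ/s)^(1/α)`. -/
theorem stmt_4 {Ω : Type*} [MeasurableSpace Ω] (ℙ : Measure Ω) [IsProbabilityMeasure ℙ]
    (h : ℕ → Ω → ℝ) (hmeas : ∀ i, Measurable (h i)) (hnonneg : ∀ i ω, 0 ≤ h i ω)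
    (x : ℕ → EuclideanSpace ℝ (Fin 2)) (y : EuclideanSpace ℝ (Fin 2))
    (hy : ∀ i, y ≠ x i) (α θ u : ℝ) (hα : 0 < α) (hθ : 0 < θ)
    (hu : u ∈ Set.Ioo (0 : ℝ) 1)
    (hsum : ∀ ω : Ω, Summable (fun i : ℕ => h (i + 1) ω * dist y (x (i + 1)) ^ (-α)))
    (hcov : ℙ {ω | h 0 ω * dist y (x 0) ^ (-α) >
        θ * ∑' i : ℕ, h (i + 1) ω * dist y (x (i + 1)) ^ (-α)} > ENNReal.ofReal u) :
    ∀ j : ℕ, 1 ≤ j → ∀ s : ℝ,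
      ℙ {ω | h 0 ω ≤ s * h j ω} ≥ ENNReal.ofReal (1 - u) →
        θ * dist y (x 0) ^ α < s * dist y (x j) ^ α ∧
          (0 < s → dist y (x j) > (θ / s) ^ (1 / α) * dist y (x 0)) := by
  intro j hj s hs
  -- distances are positive
  have hr : ∀ i, 0 < dist y (x i) := fun i => dist_pos.mpr (hy i)
  set r : ℕ → ℝ := fun i => dist y (x i) with hr_def
  -- the total interference is measurable
  have hTmeas : Measurable (fun ω => ∑' i : ℕ, h (i + 1) ω * r (i + 1) ^ (-α)) := by
    apply measurable_of_tendsto_metrizable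
      (f := fun n ω => ∑ i ∈ Finset.range n, h (i + 1) ω * r (i + 1) ^ (-α))
    · intro n
      exact Finset.measurable_sum _ fun i _ => (hmeas (i + 1)).mul_const _
    · rw [tendsto_pi_nhds]
      intro ω
      exact (hsum ω).hasSum.tendsto_sum_nat
  -- the coverage event is measurable
  set A : Set Ω := {ω | h 0 ω * r 0 ^ (-α) >
      θ * ∑' i : ℕ, h (i + 1) ω * r (i + 1) ^ (-α)} with hA_def
  have hAmeas : MeasurableSet A :=
    measurableSet_lt (hTmeas.const_mul θ) ((hmeas 0).mul_const _)
  set B : Set Ω := {ω | h 0 ω ≤ s * h j ω} with hB_def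
  -- A ∩ B is nonempty
  have hne : (A ∩ B).Nonempty := by
    by_contra hc
    rw [Set.not_nonempty_iff_eq_empty] at hc
    have hdisj : Disjoint A B := Set.disjoint_iff_inter_eq_empty.mpr hc
    have h1 : ℙ A + ℙ B = ℙ (A ∪ B) := (measure_union' hdisj hAmeas).symm
    have h2 : ℙ (A ∪ B) ≤ 1 := prob_le_one
    have h3 : (1 : ENNReal) < ℙ A + ℙ B := by
      have := ENNReal.add_lt_add_of_lt_of_le (by finiteness) hcov hs
      calc (1 : ENNReal) = ENNReal.ofReal u + ENNReal.ofReal (1 - u) := by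
            rw [← ENNReal.ofReal_add hu.1.le (by linarith [hu.2])]
            norm_num
        _ < ℙ A + ℙ B := this
    rw [h1] at h3
    exact absurd (lt_of_lt_of_le h3 h2) (lt_irrefl _)
  obtain ⟨ω, hωA, hωB⟩ := hne
  -- the interference sum dominates the single term j
  have hterm : h j ω * r j ^ (-α) ≤ ∑' i : ℕ, h (i + 1) ω * r (i + 1) ^ (-α) := by
    have := Summable.le_tsum (hsum ω) (j - 1) (fun i _ =>
      mul_nonneg (hnonneg _ ω) (Real.rpow_nonneg dist_nonneg _))
    rwa [Nat.sub_add_cancel hj] at this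
  have hrpow : ∀ i, (0:ℝ) < r i ^ (-α) := fun i => Real.rpow_pos_of_pos (hr i) _
  have hkey : θ * (h j ω * r j ^ (-α)) < h 0 ω * r 0 ^ (-α) :=
    lt_of_le_of_lt (mul_le_mul_of_nonneg_left hterm hθ.le) hωA
  have hnnj : 0 ≤ θ * (h j ω * r j ^ (-α)) :=
    mul_nonneg hθ.le (mul_nonneg (hnonneg j ω) (hrpow j).le)
  have h0pos : 0 < h 0 ω := by
    by_contra hc
    push_neg at hc
    have h0z : h 0 ω = 0 := le_antisymm hc (hnonneg 0 ω)
    have : θ * (h j ω * r j ^ (-α)) < 0 := by simpa [h0z] using hkey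
    linarith
  have hjpos : 0 < h j ω := by
    by_contra hc
    push_neg at hc
    have hjz : h j ω = 0 := le_antisymm hc (hnonneg j ω)
    have : h 0 ω ≤ 0 := by simpa [hjz] using hωB.out
    linarith
  -- chain of inequalities
  have hchain : θ * (h j ω * r j ^ (-α)) < s * h j ω * r 0 ^ (-α) :=
    lt_of_lt_of_le hkey (mul_le_mul_of_nonneg_right hωB.out (hrpow 0).le)
  have hmain : θ * r j ^ (-α) < s * r 0 ^ (-α) := by
    nlinarith [hjpos]
  have hrpow' : ∀ i, (0:ℝ) < r i ^ α := fun i => Real.rpow_pos_of_pos (hr i) _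
  have hneg : ∀ i, r i ^ (-α) = (r i ^ α)⁻¹ := fun i => Real.rpow_neg (hr i).le α
  have hmain2 : θ * r 0 ^ α < s * r j ^ α := by
    have h' : θ / r j ^ α < s / r 0 ^ α := by
      rw [div_eq_mul_inv, div_eq_mul_inv, ← hneg, ← hneg]
      exact hmain
    exact (div_lt_div_iff₀ (hrpow' j) (hrpow' 0)).mp h'
  refine ⟨hmain2, fun hspos => ?_⟩
  -- derive the Q cell form
  have hdiv : (θ / s) * r 0 ^ α < r j ^ α := by
    rw [div_mul_eq_mul_div, div_lt_iff₀ hspos]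
    linarith [hmain2]
  have h1α : 0 < 1 / α := by positivity
  have := Real.rpow_lt_rpow (by positivity) hdiv h1α
  rwa [Real.mul_rpow (by positivity) (hrpow' 0).le,
    ← Real.rpow_mul (hr 0).le, ← Real.rpow_mul (hr j).le, mul_one_div_cancel hα.ne',
    Real.rpow_one, Real.rpow_one] at this
end

section
/- Let p, q > 0 and let X and Y be independent real random variables, where X is Gamma distributed with shape p and rate p and Y is Gamma distributed with shape q and rate q. Then for every x ≥ 0, ℙ(X ≤ x·Y) = B_{p,q}(p·x/(p·x + q)), i.e. ℙ(X ≤ x·Y) = (Γ(p+q)/(Γ(p)·Γ(q)))·∫_0^{px/(px+q)} t^{p−1}·(1−t)^{q−1} dt. -/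
open MeasureTheory ProbabilityTheory
open Real Set
open scoped ENNReal

/-!
Conditionally on `Y = y > 0`, the substitution `X = y u` gives
`ℙ(X ≤ x y) = ∫_0^x y f_X(y u) du`. Integrating over the law of `Y`, the `y`-integral is a Gamma
integral, which yields the density `r^a s^b / B(a, b) · u^(a-1) (r u + s)^(-(a+b))` of `H = X / Y`
for `X ~ Γ(a, r)`, `Y ~ Γ(b, s)`. The substitution `t = r u / (r u + s)` turns this density into
the Beta(a, b) density, so `ℙ(X ≤ x Y)` is the Beta(a, b) cdf at `r x / (r x + s)`.
-/

lemma setLIntegral_Iic_eq_setLIntegral_Ioc {f : ℝ → ℝ≥0∞} (hf : ∀ t < 0, f t = 0) (x : ℝ) :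
    ∫⁻ t in Iic x, f t = ∫⁻ t in Ioc 0 x, f t := by
  have hsupp : f.support ⊆ Ici 0 := fun t ht => not_lt.1 fun h => ht (hf t h)
  rw [← setLIntegral_eq_of_support_subset (μ := volume.restrict (Iic x)) hsupp,
    Measure.restrict_restrict measurableSet_Ici, Ici_inter_Iic]
  exact setLIntegral_congr Ioc_ae_eq_Icc.symm

lemma withDensity_Iic_mul_eq_lintegral (f : ℝ → ℝ≥0∞) {y : ℝ} (hy : 0 < y) (x : ℝ) :
    volume.withDensity f (Iic (y * x)) = ∫⁻ u in Iic x, ENNReal.ofReal y * f (y * u) := by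
  rw [withDensity_apply _ measurableSet_Iic, ← image_mul_left_Iic hy,
    lintegral_image_eq_lintegral_abs_deriv_mul measurableSet_Iic
      (fun u _ => ((hasDerivAt_id' u).const_mul y).hasDerivWithinAt)
      (mul_right_injective₀ hy.ne').injOn]
  simp [abs_of_pos hy]

/-- The density of `X / Y` on `(0, ∞)` for independent `X ~ Γ(a, r)` and `Y ~ Γ(b, s)`. -/
noncomputable def gammaRatioDensity (a b r s u : ℝ) : ℝ :=
  r ^ a * s ^ b / beta a b * u ^ (a - 1) * (r * u + s) ^ (-(a + b))

lemma gammaRatioDensity_nonneg {a b r s u : ℝ} (ha : 0 < a) (hb : 0 < b) (hr : 0 < r)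
    (hs : 0 < s) (hu : 0 < u) : 0 ≤ gammaRatioDensity a b r s u := by
  have := beta_pos ha hb
  unfold gammaRatioDensity
  positivity

lemma gammaPDFReal_mul_gammaPDFReal_mul_eq {a b r s u y : ℝ} (ha : 0 < a) (hb : 0 < b)
    (hr : 0 < r) (hs : 0 < s) (hu : 0 < u) (hy : 0 < y) :
    gammaPDFReal b s y * (y * gammaPDFReal a r (y * u))
      = gammaRatioDensity a b r s u * gammaPDFReal (a + b) (r * u + s) y := by
  have hd : 0 < r * u + s := by positivity
  have hGa := (Gamma_pos_of_pos ha).ne'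
  have hGb := (Gamma_pos_of_pos hb).ne'
  have hGab := (Gamma_pos_of_pos (add_pos ha hb)).ne'
  have hd_pow := (rpow_pos_of_pos hd (a + b)).ne'
  have hy_pow : y ^ (a + b - 1) = y ^ (a - 1) * y ^ (b - 1) * y := by
    rw [show a + b - 1 = (a - 1) + (b - 1) + 1 by ring, rpow_add_one hy.ne', rpow_add hy]
  have hexp : exp (-((r * u + s) * y)) = exp (-(s * y)) * exp (-(r * (y * u))) := by
    rw [← exp_add]; ring_nf
  simp only [gammaPDFReal, if_pos hy.le, if_pos (mul_pos hy hu).le]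
  rw [gammaRatioDensity, beta, rpow_neg hd.le, hy_pow, hexp, mul_rpow hy.le hu.le]
  field_simp

lemma lintegral_gammaPDF_mul_gammaPDF_mul {a b r s u : ℝ} (ha : 0 < a) (hb : 0 < b)
    (hr : 0 < r) (hs : 0 < s) (hu : 0 < u) :
    ∫⁻ y, gammaPDF b s y * (ENNReal.ofReal y * gammaPDF a r (y * u))
      = ENNReal.ofReal (gammaRatioDensity a b r s u) := by
  calc ∫⁻ y, gammaPDF b s y * (ENNReal.ofReal y * gammaPDF a r (y * u))
      = ∫⁻ y, ENNReal.ofReal (gammaRatioDensity a b r s u) * gammaPDF (a + b) (r * u + s) y := by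
        refine lintegral_congr_ae ?_
        filter_upwards [Measure.ae_ne volume 0] with y hy
        rcases hy.lt_or_gt with hy | hy
        · simp [gammaPDF_of_neg hy]
        · simp only [gammaPDF]
          rw [← ENNReal.ofReal_mul hy.le, ← ENNReal.ofReal_mul (gammaPDFReal_nonneg hb hs y),
            ← ENNReal.ofReal_mul (gammaRatioDensity_nonneg ha hb hr hs hu),
            gammaPDFReal_mul_gammaPDFReal_mul_eq ha hb hr hs hu hy]
    _ = ENNReal.ofReal (gammaRatioDensity a b r s u) := by
      rw [lintegral_const_mul' _ _ ENNReal.ofReal_ne_top,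
        lintegral_gammaPDF_eq_one (add_pos ha hb) (by positivity), mul_one]

lemma deriv_mul_beta_integrand_eq_gammaRatioDensity {a b r s u : ℝ} (hr : 0 < r) (hs : 0 < s)
    (hu : 0 < u) :
    r * s / (r * u + s) ^ 2 *
        (1 / beta a b * (r * u / (r * u + s)) ^ (a - 1) * (1 - r * u / (r * u + s)) ^ (b - 1))
      = gammaRatioDensity a b r s u := by
  have hd : 0 < r * u + s := by positivity
  have hcompl : 1 - r * u / (r * u + s) = s / (r * u + s) := by field_simp; ring
  have := (rpow_pos_of_pos hd a).ne'
  have := (rpow_pos_of_pos hd b).ne'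
  rw [hcompl, div_rpow (by positivity) hd.le, div_rpow hs.le hd.le, mul_rpow hr.le hu.le,
    gammaRatioDensity, rpow_neg hd.le, rpow_add hd, rpow_sub_one hr.ne', rpow_sub_one hu.ne',
    rpow_sub_one hd.ne', rpow_sub_one hd.ne', rpow_sub_one hs.ne']
  field_simp

lemma setLIntegral_gammaRatioDensity_eq_betaPDF {a b r s x : ℝ} (hr : 0 < r) (hs : 0 < s)
    (hx : 0 ≤ x) :
    ∫⁻ u in Ioc 0 x, ENNReal.ofReal (gammaRatioDensity a b r s u)
      = ∫⁻ t in Ioc 0 (r * x / (r * x + s)), betaPDF a b t := by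
  set φ : ℝ → ℝ := fun u => r * u / (r * u + s)
  have hpos : ∀ u ∈ Icc 0 x, 0 < r * u + s := fun u hu => by nlinarith [hu.1]
  have hcont : ContinuousOn φ (Icc 0 x) :=
    ContinuousOn.div (by fun_prop) (by fun_prop) fun u hu => (hpos u hu).ne'
  have hmono : StrictMonoOn φ (Icc 0 x) := fun u hu v hv huv => by
    rw [div_lt_div_iff₀ (hpos u hu) (hpos v hv)]
    nlinarith [mul_pos hr hs]
  have himage : φ '' Ioc 0 x = Ioc 0 (r * x / (r * x + s)) := by
    simpa [φ] using hcont.image_Ioc_of_strictMonoOn hx hmono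
  have hderiv : ∀ u ∈ Ioc 0 x, HasDerivWithinAt φ (r * s / (r * u + s) ^ 2) (Ioc 0 x) u := by
    intro u hu
    have hne := (hpos u (Ioc_subset_Icc_self hu)).ne'
    refine (((hasDerivAt_id' u).const_mul r).div
      (((hasDerivAt_id' u).const_mul r).add_const s) hne).hasDerivWithinAt.congr_deriv ?_
    field_simp
    ring
  rw [← himage, lintegral_image_eq_lintegral_abs_deriv_mul measurableSet_Ioc hderiv
    (hmono.mono Ioc_subset_Icc_self).injOn]
  refine setLIntegral_congr_fun measurableSet_Ioc fun u hu => ?_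
  have hd := hpos u (Ioc_subset_Icc_self hu)
  rw [betaPDF_of_pos_lt_one (div_pos (mul_pos hr hu.1) hd) ((div_lt_one hd).2 (by linarith)),
    abs_of_pos (by positivity), ← ENNReal.ofReal_mul (by positivity),
    deriv_mul_beta_integrand_eq_gammaRatioDensity hr hs hu.1]

lemma betaMeasure_Iic (α β T : ℝ) :
    betaMeasure α β (Iic T) = ∫⁻ t in Ioc 0 T, betaPDF α β t := by
  rw [betaMeasure, withDensity_apply _ measurableSet_Iic,
    setLIntegral_Iic_eq_setLIntegral_Ioc (fun t ht => betaPDF_eq_zero_of_nonpos ht.le)]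

lemma toReal_betaMeasure_Iic {α β T : ℝ} (hα : 0 < α) (hβ : 0 < β) (hT0 : 0 ≤ T) (hT1 : T ≤ 1) :
    (betaMeasure α β (Iic T)).toReal
      = 1 / beta α β * ∫ t in 0..T, t ^ (α - 1) * (1 - t) ^ (β - 1) := by
  have hbeta := beta_pos hα hβ
  rw [betaMeasure_Iic, intervalIntegral.integral_of_le hT0, ← integral_const_mul,
    integral_eq_lintegral_of_nonneg_ae]
  · congr 1
    refine setLIntegral_congr_fun_ae measurableSet_Ioc ?_
    filter_upwards [Measure.ae_ne volume 1] with t ht1 ht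
    rw [betaPDF_of_pos_lt_one ht.1 (lt_of_le_of_ne (ht.2.trans hT1) ht1), mul_assoc]
  · filter_upwards [ae_restrict_mem measurableSet_Ioc] with t ht
    have : 0 ≤ 1 - t := by linarith [ht.2]
    have := ht.1
    positivity
  · exact (by fun_prop : Measurable fun t : ℝ =>
      1 / beta α β * (t ^ (α - 1) * (1 - t) ^ (β - 1))).aestronglyMeasurable

theorem gammaMeasure_prod_setOf_le_mul {a b r s x : ℝ} (ha : 0 < a) (hb : 0 < b) (hr : 0 < r)
    (hs : 0 < s) (hx : 0 ≤ x) :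
    (gammaMeasure a r).prod (gammaMeasure b s) {z | z.1 ≤ x * z.2}
      = betaMeasure a b (Iic (r * x / (r * x + s))) := by
  have := isProbabilityMeasure_gammaMeasure ha hr
  have := isProbabilityMeasure_gammaMeasure hb hs
  have hpdf (c d : ℝ) : Measurable (gammaPDF c d) := (measurable_gammaPDFReal c d).ennreal_ofReal
  set F : ℝ → ℝ → ℝ≥0∞ := fun y u => gammaPDF b s y * (ENNReal.ofReal y * gammaPDF a r (y * u))
  have hF_neg : ∀ u < 0, ∫⁻ y, F y u = 0 := by
    intro u hu
    refine (lintegral_congr fun y => ?_).trans lintegral_zero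
    rcases le_or_gt y 0 with hy | hy
    · simp [F, ENNReal.ofReal_of_nonpos hy]
    · simp [F, gammaPDF_of_neg (mul_neg_of_pos_of_neg hy hu)]
  calc (gammaMeasure a r).prod (gammaMeasure b s) {z | z.1 ≤ x * z.2}
      = ∫⁻ y, gammaMeasure a r (Iic (x * y)) ∂gammaMeasure b s :=
        Measure.prod_apply_symm (measurableSet_le measurable_fst (measurable_snd.const_mul x))
    _ = ∫⁻ y, gammaPDF b s y * gammaMeasure a r (Iic (x * y)) :=
        lintegral_withDensity_eq_lintegral_mul_non_measurable _ (hpdf b s)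
          (ae_of_all _ fun _ => ENNReal.ofReal_lt_top) _
    _ = ∫⁻ y, ∫⁻ u in Iic x, F y u := by
        refine lintegral_congr_ae ?_
        filter_upwards [Measure.ae_ne volume 0] with y hy
        rcases hy.lt_or_gt with hy | hy
        · simp [F, gammaPDF_of_neg hy]
        · rw [mul_comm x y, gammaMeasure, withDensity_Iic_mul_eq_lintegral _ hy,
            ← lintegral_const_mul' (gammaPDF b s y) _ ENNReal.ofReal_ne_top]
    _ = ∫⁻ u in Iic x, ∫⁻ y, F y u := lintegral_lintegral_swap (by fun_prop)
    _ = ∫⁻ u in Ioc 0 x, ∫⁻ y, F y u := setLIntegral_Iic_eq_setLIntegral_Ioc hF_neg x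
    _ = ∫⁻ u in Ioc 0 x, ENNReal.ofReal (gammaRatioDensity a b r s u) :=
        setLIntegral_congr_fun measurableSet_Ioc fun u hu =>
          lintegral_gammaPDF_mul_gammaPDF_mul ha hb hr hs hu.1
    _ = betaMeasure a b (Iic (r * x / (r * x + s))) := by
        rw [setLIntegral_gammaRatioDensity_eq_betaPDF hr hs hx, betaMeasure_Iic]

/-- Nakagami-(p,q) fading ratio cdf: if `X ~ Gamma(p, rate p)` and `Y ~ Gamma(q, rate q)` are
independent, then `ℙ(X ≤ x·Y) = B_{p,q}(px/(px+q))`, the regularized incomplete beta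
function. -/
theorem stmt_5 {Ω : Type*} [MeasurableSpace Ω] (P : Measure Ω) [IsProbabilityMeasure P]
    (p q : ℝ) (hp : 0 < p) (hq : 0 < q) (X Y : Ω → ℝ)
    (hX : Measurable X) (hY : Measurable Y)
    (hXY : IndepFun X Y P)
    (hXlaw : Measure.map X P = gammaMeasure p p)
    (hYlaw : Measure.map Y P = gammaMeasure q q) :
    ∀ x : ℝ, 0 ≤ x →
      (P {ω | X ω ≤ x * Y ω}).toReal =
        Real.Gamma (p + q) / (Real.Gamma p * Real.Gamma q) *
          ∫ t in (0 : ℝ)..(p * x / (p * x + q)), t ^ (p - 1) * (1 - t) ^ (q - 1) := by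
  intro x hx
  have hjoint : P {ω | X ω ≤ x * Y ω}
      = (gammaMeasure p p).prod (gammaMeasure q q) {z | z.1 ≤ x * z.2} := by
    rw [← hXlaw, ← hYlaw,
      ← (indepFun_iff_map_prod_eq_prod_map_map hX.aemeasurable hY.aemeasurable).1 hXY,
      Measure.map_apply (hX.prodMk hY)
        (measurableSet_le measurable_fst (measurable_snd.const_mul x))]
    rfl
  have hT : p * x / (p * x + q) ≤ 1 := (div_le_one (by positivity)).2 (by linarith)
  rw [hjoint, gammaMeasure_prod_setOf_le_mul hp hq hp hq hx,
    toReal_betaMeasure_Iic hp hq (by positivity) hT, beta, one_div, inv_div]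
end

section
/- Fix x ∈ (0,1). Then (Γ(2m)/Γ(m)²)·∫_0^x t^{m−1}·(1−t)^{m−1} dt tends to 1/2 as m tends to 0 from the right. -/
/-!
By `Γ(s + 1) = s Γ(s)`, the normalizing factor is
`Γ(2m) / Γ(m)² = m · Γ(2m + 1) / (2 Γ(m + 1)²)`, a simple zero at `m = 0` with leading
coefficient `1/2`, while the integral has a simple pole with residue `1`. Indeed, on `[0, x]`
with `x < 1` the factor `(1 - t)^(m - 1)` differs from `1` by at most `t / (1 - t)`, so the
integral is `∫₀ˣ t^(m-1) dt = x^m / m` up to an error bounded uniformly in `m ∈ (0, 1]`;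
hence `m` times the integral tends to `lim x^m = 1`.
-/

open Real Filter Topology Set intervalIntegral

lemma integral_rpow_sub_one {m : ℝ} (hm : 0 < m) (x : ℝ) :
    ∫ t in (0 : ℝ)..x, t ^ (m - 1) = x ^ m / m := by
  rw [integral_rpow (Or.inl (by linarith)), sub_add_cancel, zero_rpow hm.ne', sub_zero]

lemma one_sub_rpow_sub_one_sub_one_le {m t : ℝ} (hm : 0 ≤ m) (ht0 : 0 ≤ t) (ht1 : t < 1) :
    (1 - t) ^ (m - 1) - 1 ≤ t / (1 - t) := by
  have h1t : 0 < 1 - t := by linarith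
  have hle : (1 - t) ^ (m - 1) ≤ (1 - t) ^ (-1 : ℝ) :=
    rpow_le_rpow_of_exponent_ge h1t (by linarith) (by linarith)
  rw [rpow_neg_one] at hle
  rw [div_eq_mul_inv, sub_le_iff_le_add']
  calc (1 - t) ^ (m - 1) ≤ (1 - t)⁻¹ := hle
    _ = 1 + t * (1 - t)⁻¹ := by field_simp; ring

lemma norm_rpow_sub_one_mul_sub_one_le {m t x : ℝ} (hm0 : 0 < m) (hm1 : m ≤ 1)
    (ht : t ∈ Ioc 0 x) (hx : x < 1) :
    ‖t ^ (m - 1) * ((1 - t) ^ (m - 1) - 1)‖ ≤ (1 - x)⁻¹ := by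
  obtain ⟨ht0, htx⟩ := ht
  have h1t : 0 < 1 - t := by linarith
  have hpow : 0 ≤ t ^ (m - 1) := rpow_nonneg ht0.le _
  have hlow : 1 ≤ (1 - t) ^ (m - 1) :=
    one_le_rpow_of_pos_of_le_one_of_nonpos h1t (by linarith) (by linarith)
  rw [Real.norm_of_nonneg (mul_nonneg hpow (by linarith))]
  calc t ^ (m - 1) * ((1 - t) ^ (m - 1) - 1)
      ≤ t ^ (m - 1) * (t / (1 - t)) :=
        mul_le_mul_of_nonneg_left (one_sub_rpow_sub_one_sub_one_le hm0.le ht0.le (by linarith))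
          hpow
    _ = t ^ m / (1 - t) := by rw [← mul_div_assoc, ← rpow_add_one ht0.ne', sub_add_cancel]
    _ ≤ 1 / (1 - t) := by gcongr; exact rpow_le_one ht0.le (by linarith) hm0.le
    _ ≤ (1 - x)⁻¹ := by rw [one_div]; gcongr

lemma abs_integral_beta_sub_le {m x : ℝ} (hm0 : 0 < m) (hm1 : m ≤ 1) (hx0 : 0 ≤ x)
    (hx1 : x < 1) :
    |(∫ t in (0 : ℝ)..x, t ^ (m - 1) * (1 - t) ^ (m - 1)) - x ^ m / m| ≤ (1 - x)⁻¹ * x := by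
  have hint : IntervalIntegrable (fun t : ℝ => t ^ (m - 1)) MeasureTheory.volume 0 x :=
    intervalIntegrable_rpow' (by linarith)
  have hcont : ContinuousOn (fun t : ℝ => (1 - t) ^ (m - 1)) (uIcc 0 x) := by
    refine ContinuousOn.rpow_const (by fun_prop) fun t ht => Or.inl ?_
    rw [uIcc_of_le hx0] at ht
    linarith [ht.2]
  have hsplit : (∫ t in (0 : ℝ)..x, t ^ (m - 1) * (1 - t) ^ (m - 1)) - x ^ m / m =
      ∫ t in (0 : ℝ)..x, t ^ (m - 1) * ((1 - t) ^ (m - 1) - 1) := by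
    rw [← integral_rpow_sub_one hm0, ← integral_sub (hint.mul_continuousOn hcont) hint]
    simp only [mul_sub, mul_one]
  have hbound := norm_integral_le_of_norm_le_const (a := 0) (b := x) (C := (1 - x)⁻¹)
    (f := fun t => t ^ (m - 1) * ((1 - t) ^ (m - 1) - 1)) fun t ht => by
      rw [uIoc_of_le hx0] at ht
      exact norm_rpow_sub_one_mul_sub_one_le hm0 hm1 ht hx1
  rw [sub_zero, abs_of_nonneg hx0] at hbound
  rwa [hsplit, ← Real.norm_eq_abs]

lemma tendsto_mul_integral_beta {x : ℝ} (hx0 : 0 < x) (hx1 : x < 1) :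
    Tendsto (fun m : ℝ => m * ∫ t in (0 : ℝ)..x, t ^ (m - 1) * (1 - t) ^ (m - 1))
      (𝓝[>] 0) (𝓝 1) := by
  set I : ℝ → ℝ := fun m => ∫ t in (0 : ℝ)..x, t ^ (m - 1) * (1 - t) ^ (m - 1)
  have hm : Tendsto (fun m : ℝ => m) (𝓝[>] 0) (𝓝 0) :=
    tendsto_nhdsWithin_of_tendsto_nhds tendsto_id
  have hxm : Tendsto (fun m : ℝ => x ^ m) (𝓝[>] 0) (𝓝 1) := by
    simpa using ((continuous_const_rpow hx0.ne').tendsto 0).mono_left nhdsWithin_le_nhds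
  have hbdd : IsBoundedUnder (· ≤ ·) (𝓝[>] 0) (norm ∘ fun m => I m - x ^ m / m) := by
    refine isBoundedUnder_of_eventually_le (a := (1 - x)⁻¹ * x) ?_
    filter_upwards [Ioc_mem_nhdsGT one_pos] with m ⟨hm0, hm1⟩
    exact abs_integral_beta_sub_le hm0 hm1 hx0.le hx1
  have hlim := hxm.add (hm.zero_mul_isBoundedUnder_le hbdd)
  rw [add_zero] at hlim
  refine hlim.congr' ?_
  filter_upwards [self_mem_nhdsWithin] with m (hm0 : 0 < m)
  field_simp
  ring

lemma Gamma_two_mul_div_Gamma_sq {m : ℝ} (hm : 0 < m) :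
    Gamma (2 * m) / Gamma m ^ 2 = Gamma (2 * m + 1) / (2 * Gamma (m + 1) ^ 2) * m := by
  rw [Gamma_add_one hm.ne', Gamma_add_one (by positivity)]
  have := (Gamma_pos_of_pos hm).ne'
  field_simp

lemma tendsto_Gamma_two_mul_add_one_div :
    Tendsto (fun m : ℝ => Gamma (2 * m + 1) / (2 * Gamma (m + 1) ^ 2)) (𝓝 0) (𝓝 (1 / 2)) := by
  have hΓ : ContinuousAt Gamma 1 :=
    differentiableOn_Gamma_Ioi.continuousOn.continuousAt (Ioi_mem_nhds one_pos)
  have hcont : ContinuousAt (fun m : ℝ => Gamma (2 * m + 1) / (2 * Gamma (m + 1) ^ 2)) 0 := by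
    refine ContinuousAt.div ?_ (continuousAt_const.mul (ContinuousAt.pow ?_ 2)) (by simp)
    · exact hΓ.comp_of_eq (by fun_prop) (by norm_num)
    · exact hΓ.comp_of_eq (by fun_prop) (by norm_num)
  simpa using hcont.tendsto

/-- For fixed `x ∈ (0,1)`, the regularized incomplete beta function `B_{m,m}(x)` tends to
`1/2` as `m → 0⁺`. -/
theorem stmt_10 (x : ℝ) (hx : x ∈ Set.Ioo (0 : ℝ) 1) :
    Tendsto (fun m : ℝ =>
        Real.Gamma (2 * m) / (Real.Gamma m) ^ 2 *
          ∫ t in (0 : ℝ)..x, t ^ (m - 1) * (1 - t) ^ (m - 1))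
      (nhdsWithin 0 (Set.Ioi 0)) (nhds (1 / 2)) := by
  have hlim := (tendsto_Gamma_two_mul_add_one_div.mono_left nhdsWithin_le_nhds).mul
    (tendsto_mul_integral_beta hx.1 hx.2)
  rw [mul_one] at hlim
  refine hlim.congr' ?_
  filter_upwards [self_mem_nhdsWithin] with m (hm : 0 < m)
  rw [Gamma_two_mul_div_Gamma_sq hm, mul_assoc]
end

section
/- Let E be a real inner product space, let y, v ∈ E, and let ρ ≥ 1. If ‖y − v‖ > ρ·‖y‖, then ⟨y, v⟩ < ‖v‖²/(1 + ρ). -/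
open RealInnerProductSpace

/-- Half-plane bound for Q cells: in a real inner product space, if `‖y − v‖ > ρ·‖y‖` with
`ρ ≥ 1`, then `⟨y, v⟩ < ‖v‖²/(1 + ρ)`. -/
theorem stmt_12 {E : Type*} [NormedAddCommGroup E] [InnerProductSpace ℝ E]
    (y v : E) (ρ : ℝ) (hρ : 1 ≤ ρ) (h : ‖y - v‖ > ρ * ‖y‖) :
    ⟪y, v⟫ < ‖v‖ ^ 2 / (1 + ρ) := by
  have hρ0 : (0:ℝ) < 1 + ρ := by linarith
  have hsq : ‖y - v‖ ^ 2 > (ρ * ‖y‖) ^ 2 := by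
    have h0 : (0:ℝ) ≤ ρ * ‖y‖ := mul_nonneg (by linarith) (norm_nonneg y)
    nlinarith [norm_nonneg (y - v)]
  have hexp : ‖y - v‖ ^ 2 = ‖y‖ ^ 2 - 2 * ⟪y, v⟫ + ‖v‖ ^ 2 := by
    rw [@norm_sub_sq_real]
  have cs : ⟪y, v⟫ ≤ ‖y‖ * ‖v‖ := real_inner_le_norm y v
  set a := ‖y‖ with ha
  set b := ‖v‖ with hb
  have ha0 : 0 ≤ a := norm_nonneg y
  have hb0 : 0 ≤ b := norm_nonneg v
  rw [lt_div_iff₀ hρ0]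
  by_contra hc
  push_neg at hc
  have h1 : b ^ 2 - 2 * ⟪y, v⟫ - (ρ ^ 2 - 1) * a ^ 2 > 0 := by nlinarith
  have h5 : (ρ - 1) * ((b - (1 + ρ) * a) * (b + (1 + ρ) * a)) > 0 := by nlinarith
  have h4 : b * ((1 + ρ) * a - b) ≥ 0 := by nlinarith
  rcases eq_or_lt_of_le hb0 with hbe | hbp
  · have hb2 : b ^ 2 = 0 := by rw [← hbe]; ring
    nlinarith [hb2, mul_nonneg (sub_nonneg.2 hρ) (sq_nonneg a), sq_nonneg a]
  · have hx : 0 ≤ (ρ - 1) * (b + (1 + ρ) * a) :=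
      mul_nonneg (by linarith) (by nlinarith)
    nlinarith [mul_pos hbp h5, mul_nonneg hx h4]
end

section
/- Let ρ > 1 and let w ∈ ℂ satisfy |w − (m + n·i)| > ρ·|w| for every pair of integers (m,n) ≠ (0,0). Then |Re w| < 1/(1 + ρ) and |Im w| < 1/(1 + ρ). Consequently, the area (2-dimensional Lebesgue measure) of the Q cell Q_□(ρ) of the origin in the unit square lattice is at most 4/(1 + ρ)². -/
/-! Testing the cell condition against the four nearest lattice points `±1, ±i` suffices: for
`u = 1`, squaring `ρ‖w‖ < ‖w - 1‖` and discarding `(ρ² - 1)(Im w)² ≥ 0` leaves `ρ|Re w| < |Re w - 1|`,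
which forces `Re w < 1/(1+ρ)` once `ρ ≥ 1`; the other three follow by rotating `w` by `u⁻¹`.
The cell therefore lies in an open square of side `2/(1+ρ)`. -/

open MeasureTheory

theorem lt_one_div_one_add_of_mul_abs_lt_abs_sub_one {ρ x : ℝ} (hρ : 1 ≤ ρ)
    (h : ρ * |x| < |x - 1|) : x < 1 / (1 + ρ) := by
  rw [lt_div_iff₀ (by linarith)]
  rcases le_or_gt x 0 with hx | hx
  · nlinarith
  rw [abs_of_pos hx] at h
  rcases le_or_gt x 1 with hx1 | hx1
  · rw [abs_of_nonpos (by linarith)] at h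
    linarith
  · rw [abs_of_pos (by linarith)] at h
    nlinarith

namespace Complex

theorem volume_reProdIm (s t : Set ℝ) : volume (s ×ℂ t) = volume s * volume t := by
  rw [← Measure.prod_prod, ← Measure.volume_eq_prod,
    ← volume_preserving_equiv_real_prod.measure_preimage_equiv]
  rfl

theorem re_lt_of_mul_norm_lt_norm_sub_one {ρ : ℝ} {z : ℂ} (hρ : 1 ≤ ρ)
    (h : ρ * ‖z‖ < ‖z - 1‖) : z.re < 1 / (1 + ρ) := by
  have hsq : ρ ^ 2 * (z.re ^ 2 + z.im ^ 2) < (z.re - 1) ^ 2 + z.im ^ 2 := by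
    have := pow_lt_pow_left₀ h (by positivity) two_ne_zero
    rwa [mul_pow, Complex.sq_norm, Complex.sq_norm, normSq_apply, normSq_apply, sub_re, sub_im,
      one_re, one_im, sub_zero, ← sq, ← sq, ← sq] at this
  refine lt_one_div_one_add_of_mul_abs_lt_abs_sub_one hρ ?_
  rw [← abs_of_nonneg (by linarith : (0:ℝ) ≤ ρ), ← abs_mul, ← sq_lt_sq]
  have : 0 ≤ (ρ ^ 2 - 1) * z.im ^ 2 := mul_nonneg (by nlinarith) (sq_nonneg _)
  nlinarith

theorem re_div_lt_of_mul_norm_lt_norm_sub {ρ : ℝ} {w u : ℂ} (hρ : 1 ≤ ρ) (hu : ‖u‖ = 1)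
    (h : ρ * ‖w‖ < ‖w - u‖) : (w / u).re < 1 / (1 + ρ) := by
  have hu0 : u ≠ 0 := norm_ne_zero_iff.mp (by simp [hu])
  refine re_lt_of_mul_norm_lt_norm_sub_one hρ ?_
  rwa [norm_div, hu, div_one, ← div_self hu0, ← sub_div, norm_div, hu, div_one]

end Complex

def squareLatticeQCell (ρ : ℝ) : Set ℂ :=
  {w | ∀ m n : ℤ, (m, n) ≠ (0, 0) → ‖w - ((m : ℂ) + (n : ℂ) * Complex.I)‖ > ρ * ‖w‖}

theorem abs_re_lt_and_abs_im_lt_of_mem_squareLatticeQCell {ρ : ℝ} {w : ℂ} (hρ : 1 ≤ ρ)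
    (hw : w ∈ squareLatticeQCell ρ) : |w.re| < 1 / (1 + ρ) ∧ |w.im| < 1 / (1 + ρ) := by
  have hre := Complex.re_div_lt_of_mul_norm_lt_norm_sub hρ norm_one
    (by simpa using hw 1 0 (by decide))
  have hre' := Complex.re_div_lt_of_mul_norm_lt_norm_sub hρ (u := -1) (by simp)
    (by simpa using hw (-1) 0 (by decide))
  have him := Complex.re_div_lt_of_mul_norm_lt_norm_sub hρ Complex.norm_I
    (by simpa using hw 0 1 (by decide))
  have him' := Complex.re_div_lt_of_mul_norm_lt_norm_sub hρ (u := -Complex.I) (by simp)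
    (by simpa using hw 0 (-1) (by decide))
  rw [div_one] at hre
  rw [show (w / -1).re = -w.re by rw [div_neg, div_one, Complex.neg_re]] at hre'
  rw [show (w / Complex.I).re = w.im by simp] at him
  rw [show (w / -Complex.I).re = -w.im by simp [Complex.div_re]] at him'
  exact ⟨abs_lt.2 ⟨by linarith, hre⟩, abs_lt.2 ⟨by linarith, him⟩⟩

/-- In the unit square lattice, every point of the Q cell of the origin satisfies
`|Re w| < 1/(1+ρ)` and `|Im w| < 1/(1+ρ)`; consequently the area of the Q cell is at most
`4/(1+ρ)²`. -/
theorem stmt_13 (ρ : ℝ) (hρ : 1 < ρ) :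
    (∀ w : ℂ,
        (∀ m n : ℤ, (m, n) ≠ (0, 0) →
          ‖w - ((m : ℂ) + (n : ℂ) * Complex.I)‖ > ρ * ‖w‖) →
        |w.re| < 1 / (1 + ρ) ∧ |w.im| < 1 / (1 + ρ)) ∧
      volume {w : ℂ | ∀ m n : ℤ, (m, n) ≠ (0, 0) →
          ‖w - ((m : ℂ) + (n : ℂ) * Complex.I)‖ > ρ * ‖w‖} ≤
        ENNReal.ofReal (4 / (1 + ρ) ^ 2) := by
  have hcell (w : ℂ) (hw : w ∈ squareLatticeQCell ρ) :=
    abs_re_lt_and_abs_im_lt_of_mem_squareLatticeQCell hρ.le hw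
  refine ⟨hcell, ?_⟩
  set a := 1 / (1 + ρ) with ha
  have ha_pos : 0 < a := by positivity
  have hsub : squareLatticeQCell ρ ⊆ Set.Ioo (-a) a ×ℂ Set.Ioo (-a) a := fun w hw ↦
    ⟨abs_lt.1 (hcell w hw).1, abs_lt.1 (hcell w hw).2⟩
  calc volume (squareLatticeQCell ρ)
      ≤ volume (Set.Ioo (-a) a ×ℂ Set.Ioo (-a) a) := measure_mono hsub
    _ = ENNReal.ofReal (4 / (1 + ρ) ^ 2) := by
      rw [Complex.volume_reProdIm, Real.volume_Ioo, ← ENNReal.ofReal_mul (by linarith)]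
      congr 1
      rw [ha]
      field_simp
      ring
end

section
/- Let ρ > 1. The area (2-dimensional Lebesgue measure) of the Q cell Q_□(ρ) of the origin in the unit square lattice equals (4ρ²·arctan((√(2ρ²−1) − 1)/(√(2ρ²−1) + 1)) − 2√(2ρ²−1) + 2)/(ρ² − 1)². -/
/-!
With `a = ρ² - 1`, the condition `|w - z| > ρ|w|` for `z = m + n i` reads
`a|w|² + 2(m re w + n im w) < m² + n²`. Since `|m| ≤ m²`, the constraint of every nonzero lattice
point is dominated by `m² + n²` times that of the four neighbours `±1, ±i`, so the Q cell is
`{a|w|² + 2 max(|re w|, |im w|) < 1}`. In polar coordinates this region is star-shaped, bounded by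
the positive root `R(θ)` of `a r² + 2 max(|cos θ|, |sin θ|) r = 1`, so its area is
`∫_{-π}^{π} R²/2`, which by the symmetries of the square is eight times the integral over
`[0, π/4]`. There `max(|cos θ|, |sin θ|) = cos θ` and `R²/2` has an elementary primitive; its value
at `π/4` simplifies with `arcsin (1/(√2 ρ)) = π/4 - arctan ((s - 1)/(s + 1))`, `s = √(2ρ² - 1)`.
-/

open MeasureTheory Real Set

theorem setLIntegral_ofReal_Ioo_zero {b : ℝ} (hb : 0 ≤ b) :
    ∫⁻ r in Ioo 0 b, ENNReal.ofReal r = ENNReal.ofReal (b ^ 2 / 2) := by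
  rw [← ofReal_integral_eq_lintegral_ofReal, ← integral_Ioc_eq_integral_Ioo,
    ← intervalIntegral.integral_of_le hb, integral_id]
  · ring_nf
  · exact continuous_id.integrableOn_Icc.mono_set Ioo_subset_Icc_self
  · exact (ae_restrict_mem measurableSet_Ioo).mono fun r hr => hr.1.le

theorem Complex.volume_eq_setLIntegral_sq_div_two {S : Set ℂ} (hS : MeasurableSet S) {R : ℝ → ℝ}
    (hR0 : ∀ θ, 0 ≤ R θ)
    (hR : ∀ r θ, 0 < r → (Complex.polarCoord.symm (r, θ) ∈ S ↔ r < R θ)) :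
    volume S = ∫⁻ θ in Ioo (-π) π, ENNReal.ofReal (R θ ^ 2 / 2) := by
  have hmeas : Measurable fun p : ℝ × ℝ =>
      ENNReal.ofReal p.1 • S.indicator (1 : ℂ → ENNReal) (Complex.polarCoord.symm p) :=
    measurable_fst.ennreal_ofReal.smul ((measurable_one.indicator hS).comp
      (Complex.measurableEquivRealProd.symm.measurable.comp continuous_polarCoord_symm.measurable))
  rw [← lintegral_indicator_one hS, ← Complex.lintegral_comp_polarCoord_symm,
    polarCoord_target, Measure.volume_eq_prod, ← Measure.prod_restrict,
    lintegral_prod_symm _ hmeas.aemeasurable]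
  refine setLIntegral_congr_fun measurableSet_Ioo fun θ _ => ?_
  rw [← setLIntegral_ofReal_Ioo_zero (hR0 θ), ← Ioi_inter_Iio, inter_comm,
    ← Measure.restrict_restrict measurableSet_Iio, ← lintegral_indicator measurableSet_Iio]
  refine setLIntegral_congr_fun measurableSet_Ioi fun r hr => ?_
  by_cases h : r < R θ
  · simp only [smul_eq_mul, indicator_of_mem ((hR r θ hr).2 h), indicator_of_mem (mem_Iio.2 h),
      Pi.one_apply, mul_one]
  · simp only [smul_eq_mul, indicator_of_notMem (mt (hR r θ hr).1 h),
      indicator_of_notMem (mt mem_Iio.1 h), mul_zero]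

theorem integral_neg_pi_pi_eq_eight_mul {f : ℝ → ℝ} (hf : Continuous f)
    (heven : ∀ x, f (-x) = f x) (hper : Function.Periodic f (π / 2)) :
    ∫ x in -π..π, f x = 8 * ∫ x in 0..π / 4, f x := by
  have hint : ∀ u v, IntervalIntegrable f volume u v := hf.intervalIntegrable
  have hrefl : ∀ x, f (π / 2 - x) = f x := fun x => by rw [sub_eq_neg_add, hper, heven]
  have hquarter : ∫ x in -π..π, f x = 4 * ∫ x in 0..π / 2, f x := by
    have h := hper.intervalIntegral_add_zsmul_eq 4 (-π) hint
    rw [hper.intervalIntegral_add_eq (-π) 0, zero_add] at h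
    convert h using 2 <;> norm_num
    ring
  have hhalf : ∫ x in π / 4..π / 2, f x = ∫ x in 0..π / 4, f x := by
    have h := intervalIntegral.integral_comp_sub_left f (a := 0) (b := π / 4) (π / 2)
    simp_rw [hrefl] at h
    rw [h]
    congr 1 <;> ring
  rw [hquarter, ← intervalIntegral.integral_add_adjacent_intervals (hint 0 (π / 4)) (hint _ _),
    hhalf]
  ring

lemma abs_intCast_le_sq (m : ℤ) : |(m : ℝ)| ≤ (m : ℝ) ^ 2 := by
  have := Int.natAbs_le_self_sq m
  rw [Int.natCast_natAbs] at this
  exact_mod_cast this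

lemma one_le_intCast_sq_add_sq {m n : ℤ} (hmn : (m, n) ≠ (0, 0)) :
    (1 : ℝ) ≤ (m : ℝ) ^ 2 + (n : ℝ) ^ 2 := by
  have : 0 < m ^ 2 + n ^ 2 := by
    rcases eq_or_ne m 0 with rfl | hm
    · have hn : n ≠ 0 := by rintro rfl; exact hmn rfl
      positivity
    · positivity
  exact_mod_cast this

lemma lt_norm_sub_iff {ρ : ℝ} (hρ : 0 ≤ ρ) (w z : ℂ) :
    ρ * ‖w‖ < ‖w - z‖ ↔ (ρ ^ 2 - 1) * ‖w‖ ^ 2 + 2 * (z.re * w.re + z.im * w.im) < ‖z‖ ^ 2 := by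
  rw [← pow_lt_pow_iff_left₀ (by positivity) (norm_nonneg _) two_ne_zero]
  simp only [mul_pow, Complex.sq_norm, Complex.normSq_apply, Complex.sub_re, Complex.sub_im]
  constructor <;> intro h <;> linarith

lemma add_two_mul_lt_of_add_two_max_lt {c x y : ℝ} (hc : 0 ≤ c) (h : c + 2 * max |x| |y| < 1)
    {m n : ℤ} (hmn : (m, n) ≠ (0, 0)) :
    c + 2 * (m * x + n * y) < (m : ℝ) ^ 2 + (n : ℝ) ^ 2 := by
  set M := max |x| |y|
  have hk := one_le_intCast_sq_add_sq hmn
  have hM : 0 ≤ M := (abs_nonneg x).trans (le_max_left _ _)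
  have hmx : m * x ≤ (m : ℝ) ^ 2 * M := calc
    m * x ≤ |(m : ℝ)| * |x| := (le_abs_self _).trans_eq (abs_mul _ _)
    _ ≤ (m : ℝ) ^ 2 * M := mul_le_mul (abs_intCast_le_sq m) (le_max_left _ _) (abs_nonneg _)
      (sq_nonneg _)
  have hny : n * y ≤ (n : ℝ) ^ 2 * M := calc
    n * y ≤ |(n : ℝ)| * |y| := (le_abs_self _).trans_eq (abs_mul _ _)
    _ ≤ (n : ℝ) ^ 2 * M := mul_le_mul (abs_intCast_le_sq n) (le_max_right _ _) (abs_nonneg _)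
      (sq_nonneg _)
  nlinarith

/-- The Q cell of the square lattice for `a = ρ² - 1`, where only the neighbours `±1, ±i` bind. -/
def squareCell (a : ℝ) : Set ℂ := {w | a * ‖w‖ ^ 2 + 2 * max |w.re| |w.im| < 1}

lemma isOpen_squareCell (a : ℝ) : IsOpen (squareCell a) :=
  isOpen_lt (by fun_prop) continuous_const

lemma qCell_eq_squareCell {ρ : ℝ} (hρ : 1 ≤ ρ) :
    {w : ℂ | ∀ m n : ℤ, (m, n) ≠ (0, 0) → ‖w - ((m : ℂ) + (n : ℂ) * Complex.I)‖ > ρ * ‖w‖} =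
      squareCell (ρ ^ 2 - 1) := by
  have hlat : ∀ (w : ℂ) (m n : ℤ), ‖w - ((m : ℂ) + (n : ℂ) * Complex.I)‖ > ρ * ‖w‖ ↔
      (ρ ^ 2 - 1) * ‖w‖ ^ 2 + 2 * (m * w.re + n * w.im) < (m : ℝ) ^ 2 + (n : ℝ) ^ 2 := by
    intro w m n
    have hz : ‖(m : ℂ) + (n : ℂ) * Complex.I‖ ^ 2 = (m : ℝ) ^ 2 + (n : ℝ) ^ 2 := by
      rw [Complex.sq_norm, ← Complex.normSq_add_mul_I]
      norm_cast
    rw [gt_iff_lt, lt_norm_sub_iff (by linarith), hz]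
    simp
  ext w
  simp only [mem_ofPred_eq, squareCell, hlat]
  constructor
  · intro h
    have h₁ := h 1 0 (by simp)
    have h₂ := h (-1) 0 (by simp)
    have h₃ := h 0 1 (by simp)
    have h₄ := h 0 (-1) (by simp)
    push_cast at h₁ h₂ h₃ h₄
    rcases max_cases |w.re| |w.im| with ⟨hmax, -⟩ | ⟨hmax, -⟩ <;> rw [hmax] <;>
      cases abs_cases w.re <;> cases abs_cases w.im <;> linarith
  · intro h m n hmn
    exact add_two_mul_lt_of_add_two_max_lt (mul_nonneg (by nlinarith) (sq_nonneg _)) h hmn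

noncomputable def maxAbsCosSin (θ : ℝ) : ℝ := max |cos θ| |sin θ|

noncomputable def squareCellRadius (a θ : ℝ) : ℝ := (√(maxAbsCosSin θ ^ 2 + a) - maxAbsCosSin θ) / a

lemma maxAbsCosSin_nonneg (θ : ℝ) : 0 ≤ maxAbsCosSin θ := (abs_nonneg _).trans (le_max_left _ _)

lemma continuous_maxAbsCosSin : Continuous maxAbsCosSin := by
  unfold maxAbsCosSin; fun_prop

lemma maxAbsCosSin_neg (θ : ℝ) : maxAbsCosSin (-θ) = maxAbsCosSin θ := by
  simp only [maxAbsCosSin, cos_neg, sin_neg, abs_neg]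

lemma maxAbsCosSin_periodic : Function.Periodic maxAbsCosSin (π / 2) := fun θ => by
  simp only [maxAbsCosSin, cos_add_pi_div_two, sin_add_pi_div_two, abs_neg, max_comm]

lemma maxAbsCosSin_eq_cos {θ : ℝ} (hθ : θ ∈ Icc 0 (π / 4)) : maxAbsCosSin θ = cos θ := by
  obtain ⟨h0, h1⟩ := hθ
  have hs : 0 ≤ sin θ := sin_nonneg_of_nonneg_of_le_pi h0 (by linarith [pi_pos])
  have hsc : sin θ ≤ cos θ := by
    rw [← cos_pi_div_two_sub]
    exact cos_le_cos_of_nonneg_of_le_pi h0 (by linarith [pi_pos]) (by linarith)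
  rw [maxAbsCosSin, abs_of_nonneg hs, abs_of_nonneg (hs.trans hsc), max_eq_left hsc]

lemma mul_sq_add_two_mul_lt_one_iff {a M r : ℝ} (ha : 0 < a) (hr : 0 ≤ r) :
    a * r ^ 2 + 2 * M * r < 1 ↔ r < (√(M ^ 2 + a) - M) / a := by
  have hs : √(M ^ 2 + a) ^ 2 = M ^ 2 + a := sq_sqrt (by positivity)
  have hM : |M| < √(M ^ 2 + a) := by
    rw [lt_sqrt (abs_nonneg M), sq_abs]
    linarith
  have hfactor : a * (a * r ^ 2 + 2 * M * r - 1) =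
      (a * r + M - √(M ^ 2 + a)) * (a * r + M + √(M ^ 2 + a)) := by
    linear_combination hs
  have hpos : 0 < a * r + M + √(M ^ 2 + a) := by
    linarith [neg_abs_le M, mul_nonneg ha.le hr]
  rw [lt_div_iff₀ ha]
  constructor <;> intro h <;> nlinarith

lemma squareCellRadius_nonneg {a : ℝ} (ha : 0 < a) (θ : ℝ) : 0 ≤ squareCellRadius a θ :=
  div_nonneg (sub_nonneg.2 ((le_sqrt (maxAbsCosSin_nonneg θ) (by positivity)).2 (by linarith)))
    ha.le

lemma continuous_squareCellRadius (a : ℝ) : Continuous (squareCellRadius a) := by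
  unfold squareCellRadius
  have := continuous_maxAbsCosSin
  fun_prop

lemma squareCellRadius_neg (a θ : ℝ) : squareCellRadius a (-θ) = squareCellRadius a θ := by
  simp only [squareCellRadius, maxAbsCosSin_neg]

lemma squareCellRadius_periodic (a : ℝ) : Function.Periodic (squareCellRadius a) (π / 2) :=
  fun θ => by simp only [squareCellRadius, maxAbsCosSin_periodic θ]

lemma polarCoord_symm_mem_squareCell_iff {a r : ℝ} (ha : 0 < a) (hr : 0 < r) (θ : ℝ) :
    Complex.polarCoord.symm (r, θ) ∈ squareCell a ↔ r < squareCellRadius a θ := by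
  have hmax : max |r * cos θ| |r * sin θ| = maxAbsCosSin θ * r := by
    rw [abs_mul, abs_mul, abs_of_pos hr, ← mul_max_of_nonneg _ _ hr.le, mul_comm, maxAbsCosSin]
  rw [squareCellRadius, ← mul_sq_add_two_mul_lt_one_iff ha hr.le]
  simp only [squareCell, mem_ofPred_eq, Complex.norm_polarCoord_symm, abs_of_pos hr]
  have hre : (Complex.polarCoord.symm (r, θ)).re = r * cos θ := by simp [-Complex.ofReal_cos]
  have him : (Complex.polarCoord.symm (r, θ)).im = r * sin θ := by simp [-Complex.ofReal_sin]
  rw [hre, him, hmax, mul_assoc]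

noncomputable def squareCellPrimitive (a θ : ℝ) : ℝ :=
  ((a + 1) * θ + sin θ * cos θ - sin θ * √(a + 1 - sin θ ^ 2)
    - (a + 1) * arcsin (sin θ / √(a + 1))) / (2 * a ^ 2)

lemma hasDerivAt_squareCellPrimitive {a : ℝ} (ha : 0 < a) (θ : ℝ) :
    HasDerivAt (squareCellPrimitive a) (((√(cos θ ^ 2 + a) - cos θ) / a) ^ 2 / 2) θ := by
  have hq0 : 0 < a + 1 - sin θ ^ 2 := by linarith [sin_sq_le_one θ]
  set q := √(a + 1 - sin θ ^ 2) with hq_def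
  have hq : q ^ 2 = a + 1 - sin θ ^ 2 := sq_sqrt hq0.le
  have hqpos : 0 < q := sqrt_pos.2 hq0
  have hb : √(a + 1) ^ 2 = a + 1 := sq_sqrt (by linarith)
  have hbpos : 0 < √(a + 1) := sqrt_pos.2 (by linarith)
  have hratio : |sin θ / √(a + 1)| < 1 := by
    rw [abs_div, abs_of_pos hbpos, div_lt_one hbpos]
    exact (abs_sin_le_one θ).trans_lt ((lt_sqrt zero_le_one).2 (by linarith))
  have hroot : √(1 - (sin θ / √(a + 1)) ^ 2) = q / √(a + 1) := by
    rw [div_pow, hb, ← sqrt_div hq0.le, one_sub_div (by linarith)]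
  have hcos : √(cos θ ^ 2 + a) = q := by rw [hq_def, cos_sq']; ring_nf
  have hlin : HasDerivAt (fun θ => (a + 1) * θ) (a + 1) θ := by
    simpa using (hasDerivAt_id θ).const_mul (a + 1)
  have hsincos : HasDerivAt (fun θ => sin θ * cos θ) (cos θ * cos θ + sin θ * -sin θ) θ :=
    (hasDerivAt_sin θ).mul (hasDerivAt_cos θ)
  have hsqrt : HasDerivAt (fun θ => √(a + 1 - sin θ ^ 2)) (-(2 * sin θ * cos θ) / (2 * q)) θ := by
    have h : HasDerivAt (fun θ => a + 1 - sin θ ^ 2) (-(2 * sin θ * cos θ)) θ := by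
      simpa using ((hasDerivAt_sin θ).pow 2).const_sub (a + 1)
    exact h.sqrt hq0.ne'
  have harcsin : HasDerivAt (fun θ => arcsin (sin θ / √(a + 1)))
      (1 / √(1 - (sin θ / √(a + 1)) ^ 2) * (cos θ / √(a + 1))) θ :=
    (hasDerivAt_arcsin (by linarith [neg_abs_le (sin θ / √(a + 1))])
      (by linarith [le_abs_self (sin θ / √(a + 1))])).comp θ ((hasDerivAt_sin θ).div_const _)
  refine ((((hlin.add hsincos).sub ((hasDerivAt_sin θ).mul hsqrt)).sub
    (harcsin.const_mul (a + 1))).div_const (2 * a ^ 2)).congr_deriv ?_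
  rw [hroot, hcos]
  field_simp
  linear_combination (cos θ - q) * hq

lemma integral_sq_squareCellRadius {a : ℝ} (ha : 0 < a) :
    ∫ θ in 0..π / 4, squareCellRadius a θ ^ 2 / 2 = squareCellPrimitive a (π / 4) := by
  have hcos : ∀ θ ∈ uIcc 0 (π / 4),
      squareCellRadius a θ ^ 2 / 2 = ((√(cos θ ^ 2 + a) - cos θ) / a) ^ 2 / 2 := by
    intro θ hθ
    rw [uIcc_of_le (by positivity)] at hθ
    rw [squareCellRadius, maxAbsCosSin_eq_cos hθ]
  rw [intervalIntegral.integral_congr hcos,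
    intervalIntegral.integral_eq_sub_of_hasDerivAt (fun θ _ => hasDerivAt_squareCellPrimitive ha θ)
      (by apply Continuous.intervalIntegrable; fun_prop)]
  simp [squareCellPrimitive]

theorem volume_squareCell {a : ℝ} (ha : 0 < a) :
    volume (squareCell a) = ENNReal.ofReal (8 * squareCellPrimitive a (π / 4)) := by
  have hψ : Continuous fun θ => squareCellRadius a θ ^ 2 / 2 := by
    have := continuous_squareCellRadius a
    fun_prop
  rw [Complex.volume_eq_setLIntegral_sq_div_two (isOpen_squareCell a).measurableSet
      (squareCellRadius_nonneg ha) (fun r θ hr => polarCoord_symm_mem_squareCell_iff ha hr θ),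
    ← ofReal_integral_eq_lintegral_ofReal (hψ.integrableOn_Icc.mono_set Ioo_subset_Icc_self)
      (ae_of_all _ fun θ => by positivity),
    ← integral_Ioc_eq_integral_Ioo, ← intervalIntegral.integral_of_le (by linarith [pi_pos]),
    integral_neg_pi_pi_eq_eight_mul hψ (fun θ => by rw [squareCellRadius_neg])
      ((squareCellRadius_periodic a).comp fun r => r ^ 2 / 2),
    integral_sq_squareCellRadius ha]

lemma arctan_sub_one_div_add_one_add_arctan_inv {s : ℝ} (hs : 0 < s) :
    arctan ((s - 1) / (s + 1)) + arctan s⁻¹ = π / 4 := by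
  have hlt : (s - 1) / (s + 1) * s⁻¹ < 1 := calc
    _ = (s - 1) / ((s + 1) * s) := by field_simp
    _ < 1 := by rw [div_lt_one (by positivity)]; nlinarith
  have hone : ((s - 1) / (s + 1) + s⁻¹) / (1 - (s - 1) / (s + 1) * s⁻¹) = 1 := by
    rw [div_eq_one_iff_eq (sub_pos.2 hlt).ne']
    field_simp
    ring
  rw [arctan_add hlt, hone, arctan_one]

lemma arcsin_div_sqrt_two_mul {ρ : ℝ} (hρ0 : 0 < ρ) (hρ : 1 < 2 * ρ ^ 2) :
    arcsin (√2 / 2 / ρ) = arctan (√(2 * ρ ^ 2 - 1))⁻¹ := by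
  have h2 : √2 ^ 2 = 2 := sq_sqrt zero_le_two
  have hs : √(2 * ρ ^ 2 - 1) ^ 2 = 2 * ρ ^ 2 - 1 := sq_sqrt (by linarith)
  have hx0 : 0 < √2 / 2 / ρ := by positivity
  have hx2 : (√2 / 2 / ρ) ^ 2 = 1 / (2 * ρ ^ 2) := by
    rw [div_pow, div_pow, h2]; field_simp
  have hx1 : √2 / 2 / ρ < 1 := by
    rw [div_lt_one hρ0]; nlinarith [sqrt_nonneg 2]
  have hcos : √(1 - (√2 / 2 / ρ) ^ 2) = √(2 * ρ ^ 2 - 1) * (√2 / 2 / ρ) := by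
    rw [← sqrt_sq (by positivity : 0 ≤ √(2 * ρ ^ 2 - 1) * (√2 / 2 / ρ)), mul_pow, hs, hx2]
    congr 1
    field_simp
  rw [arcsin_eq_arctan ⟨by linarith, hx1⟩, hcos, div_mul_cancel_right₀ hx0.ne']

lemma eight_mul_squareCellPrimitive_pi_div_four {ρ : ℝ} (hρ : 1 < ρ) :
    8 * squareCellPrimitive (ρ ^ 2 - 1) (π / 4) =
      (4 * ρ ^ 2 * arctan ((√(2 * ρ ^ 2 - 1) - 1) / (√(2 * ρ ^ 2 - 1) + 1))
        - 2 * √(2 * ρ ^ 2 - 1) + 2) / (ρ ^ 2 - 1) ^ 2 := by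
  have hρ0 : 0 < ρ := by linarith
  have h2 : √2 ^ 2 = 2 := sq_sqrt zero_le_two
  have harcsin : arcsin (√2 / 2 / ρ) =
      π / 4 - arctan ((√(2 * ρ ^ 2 - 1) - 1) / (√(2 * ρ ^ 2 - 1) + 1)) := by
    rw [arcsin_div_sqrt_two_mul hρ0 (by nlinarith)]
    linarith [arctan_sub_one_div_add_one_add_arctan_inv (sqrt_pos.2 (by nlinarith) :
      0 < √(2 * ρ ^ 2 - 1))]
  have hq : √(ρ ^ 2 - 1 + 1 - (√2 / 2) ^ 2) = √(2 * ρ ^ 2 - 1) / √2 := by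
    rw [← sqrt_div' _ zero_le_two]; congr 1; rw [div_pow, h2]; ring
  rw [squareCellPrimitive, sin_pi_div_four, cos_pi_div_four, hq, sub_add_cancel,
    sqrt_sq hρ0.le, harcsin]
  have ha : ρ ^ 2 - 1 ≠ 0 := by nlinarith
  field_simp
  linear_combination 32 * h2

/-- Area of the Q cell of the origin in the unit square lattice:
`(4ρ²·arctan((√(2ρ²−1) − 1)/(√(2ρ²−1) + 1)) − 2√(2ρ²−1) + 2)/(ρ² − 1)²`. -/
theorem stmt_14 (ρ : ℝ) (hρ : 1 < ρ) :
    volume {w : ℂ | ∀ m n : ℤ, (m, n) ≠ (0, 0) →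
        ‖w - ((m : ℂ) + (n : ℂ) * Complex.I)‖ > ρ * ‖w‖} =
      ENNReal.ofReal
        ((4 * ρ ^ 2 * Real.arctan ((Real.sqrt (2 * ρ ^ 2 - 1) - 1) / (Real.sqrt (2 * ρ ^ 2 - 1) + 1))
            - 2 * Real.sqrt (2 * ρ ^ 2 - 1) + 2) / (ρ ^ 2 - 1) ^ 2) := by
  rw [qCell_eq_squareCell hρ.le, volume_squareCell (by nlinarith),
    eight_mul_squareCellPrimitive_pi_div_four hρ]
end

section
/- Let ρ > 1. The area (2-dimensional Lebesgue measure) of the Q cell Q_△(ρ) of the origin in the unit triangular lattice is less than 2√3/(1 + ρ)². -/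
/-!
Write `a = 1/(1+ρ)`. For a unit vector `v`, the condition `‖w - v‖ > ρ‖w‖` says
`(ρ² - 1)‖w‖² < 1 - 2⟪v, w⟫`, and with `⟪v, w⟫² ≤ ‖w‖²` this forces `⟪v, w⟫ < a`, since
`a` is the positive root of `(ρ² - 1)t² + 2t = 1`. Applied to the six nearest lattice points it
confines the Q cell to the hexagon `|x| < a, |x| + √3|y| < 2a`, whose area is `2√3a²`.
Averaging the conditions for `ω` and `ω - 1` (whose sum is `i√3`) gives
`(ρ² - 1)y² + √3y < 1`, so `|y| < b` for the positive root `b` of `(ρ² - 1)b² + √3b = 1`.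
For `ρ > 1` this root lies strictly below the top vertex `2a/√3` of the hexagon, so cutting the
hexagon at `|y| = b` removes a set of positive area.
-/

open MeasureTheory Real Set
open scoped InnerProductSpace

theorem lt_of_mul_sq_add_mul_eq_one {k c b t n : ℝ} (hk : 0 ≤ k) (hc : 0 ≤ c) (hb : 0 < b)
    (hkb : k * b ^ 2 + c * b = 1) (htn : t ^ 2 ≤ n) (h : k * n < 1 - c * t) : t < b := by
  by_contra! hbt
  have : k * b ^ 2 ≤ k * t ^ 2 := by gcongr
  nlinarith [mul_le_mul_of_nonneg_left htn hk]

theorem exists_mem_Ioo_mul_sq_add_mul_eq_one {k c B : ℝ} (hB : 0 ≤ B)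
    (h : 1 < k * B ^ 2 + c * B) : ∃ b ∈ Ioo 0 B, k * b ^ 2 + c * b = 1 := by
  simpa using intermediate_value_Ioo hB (f := fun y => k * y ^ 2 + c * y) (by fun_prop)
    ⟨by simp, h⟩

section InnerProductSpace

variable {E : Type*} [NormedAddCommGroup E] [InnerProductSpace ℝ E] {ρ : ℝ} {v w : E}

theorem sq_sub_one_mul_sq_norm_lt_of_mul_norm_lt_norm_sub (hρ : 0 ≤ ρ)
    (h : ρ * ‖w‖ < ‖w - v‖) : (ρ ^ 2 - 1) * ‖w‖ ^ 2 < ‖v‖ ^ 2 - 2 * ⟪v, w⟫_ℝ := by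
  have hsq : (ρ * ‖w‖) ^ 2 < ‖w - v‖ ^ 2 := pow_lt_pow_left₀ h (by positivity) two_ne_zero
  rw [norm_sub_sq_real, real_inner_comm] at hsq
  linarith

theorem inner_lt_inv_one_add_of_mul_norm_lt_norm_sub (hρ : 1 ≤ ρ) (hv : ‖v‖ = 1)
    (h : ρ * ‖w‖ < ‖w - v‖) : ⟪v, w⟫_ℝ < (1 + ρ)⁻¹ := by
  have hvw := sq_sub_one_mul_sq_norm_lt_of_mul_norm_lt_norm_sub (by linarith) h
  have hcs : ⟪v, w⟫_ℝ ^ 2 ≤ ‖w‖ ^ 2 := by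
    simpa only [sq_abs, hv, one_mul] using
      pow_le_pow_left₀ (abs_nonneg _) (abs_real_inner_le_norm v w) 2
  rw [hv] at hvw
  exact lt_of_mul_sq_add_mul_eq_one (k := ρ ^ 2 - 1) (by nlinarith) zero_le_two (by positivity)
    (by field_simp; ring) hcs (by linarith)

end InnerProductSpace

noncomputable def triangularLatticePoint (m n : ℤ) : ℂ :=
  (m : ℂ) * 1 + (n : ℂ) * (1 / 2 + Complex.I * (Real.sqrt 3 / 2 : ℝ))

def qCell (ρ : ℝ) : Set ℂ :=
  {w : ℂ | ∀ m n : ℤ, (m, n) ≠ (0, 0) → ‖w - triangularLatticePoint m n‖ > ρ * ‖w‖}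

@[simp] theorem triangularLatticePoint_re (m n : ℤ) :
    (triangularLatticePoint m n).re = m + n / 2 := by
  simp [triangularLatticePoint, div_eq_mul_inv]

@[simp] theorem triangularLatticePoint_im (m n : ℤ) :
    (triangularLatticePoint m n).im = n * (√3 / 2) := by
  simp [triangularLatticePoint]

theorem inner_triangularLatticePoint (m n : ℤ) (w : ℂ) :
    ⟪triangularLatticePoint m n, w⟫_ℝ = (m + n / 2) * w.re + n * (√3 / 2) * w.im := by
  simp only [Complex.inner, Complex.mul_re, Complex.conj_re, Complex.conj_im,
    triangularLatticePoint_re, triangularLatticePoint_im]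
  ring

theorem norm_triangularLatticePoint_eq_one {m n : ℤ} (h : m ^ 2 + m * n + n ^ 2 = 1) :
    ‖triangularLatticePoint m n‖ = 1 := by
  have h' : ((m : ℝ) ^ 2 + m * n + n ^ 2) = 1 := by exact_mod_cast h
  rw [← pow_eq_one_iff_of_nonneg (norm_nonneg _) two_ne_zero, Complex.sq_norm,
    Complex.normSq_apply, triangularLatticePoint_re, triangularLatticePoint_im]
  linear_combination ((n : ℝ) ^ 2 / 4) * sq_sqrt (show (0 : ℝ) ≤ 3 by norm_num) + h'

theorem ne_zero_of_sq_add_mul_add_sq_eq_one {m n : ℤ} (h : m ^ 2 + m * n + n ^ 2 = 1) :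
    (m, n) ≠ (0, 0) := by
  rintro ⟨⟩
  simp_all

section QCell

variable {ρ : ℝ} {w : ℂ}

theorem inner_lt_of_mem_qCell (hρ : 1 ≤ ρ) (hw : w ∈ qCell ρ) {m n : ℤ}
    (hmn : m ^ 2 + m * n + n ^ 2 = 1) :
    (m + n / 2) * w.re + n * (√3 / 2) * w.im < (1 + ρ)⁻¹ := by
  rw [← inner_triangularLatticePoint]
  exact inner_lt_inv_one_add_of_mul_norm_lt_norm_sub hρ (norm_triangularLatticePoint_eq_one hmn)
    (hw m n (ne_zero_of_sq_add_mul_add_sq_eq_one hmn))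

theorem sq_sub_one_mul_sq_norm_lt_of_mem_qCell (hρ : 0 ≤ ρ) (hw : w ∈ qCell ρ) {m n : ℤ}
    (hmn : m ^ 2 + m * n + n ^ 2 = 1) :
    (ρ ^ 2 - 1) * ‖w‖ ^ 2 < 1 - 2 * ((m + n / 2) * w.re + n * (√3 / 2) * w.im) := by
  have h := sq_sub_one_mul_sq_norm_lt_of_mul_norm_lt_norm_sub hρ
    (hw m n (ne_zero_of_sq_add_mul_add_sq_eq_one hmn))
  rwa [norm_triangularLatticePoint_eq_one hmn, one_pow, inner_triangularLatticePoint] at h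

theorem abs_re_lt_of_mem_qCell (hρ : 1 ≤ ρ) (hw : w ∈ qCell ρ) : |w.re| < (1 + ρ)⁻¹ := by
  have h₁ := inner_lt_of_mem_qCell hρ hw (m := 1) (n := 0) (by norm_num)
  have h₂ := inner_lt_of_mem_qCell hρ hw (m := -1) (n := 0) (by norm_num)
  push_cast at h₁ h₂
  exact abs_lt.mpr ⟨by linarith, by linarith⟩

theorem abs_re_add_sqrt_three_mul_abs_im_lt_of_mem_qCell (hρ : 1 ≤ ρ) (hw : w ∈ qCell ρ) :
    |w.re| + √3 * |w.im| < 2 * (1 + ρ)⁻¹ := by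
  have h₁ := inner_lt_of_mem_qCell hρ hw (m := 0) (n := 1) (by norm_num)
  have h₂ := inner_lt_of_mem_qCell hρ hw (m := -1) (n := 1) (by norm_num)
  have h₃ := inner_lt_of_mem_qCell hρ hw (m := 0) (n := -1) (by norm_num)
  have h₄ := inner_lt_of_mem_qCell hρ hw (m := 1) (n := -1) (by norm_num)
  push_cast at h₁ h₂ h₃ h₄
  ring_nf at h₁ h₂ h₃ h₄
  rcases abs_cases w.re with ⟨hx, _⟩ | ⟨hx, _⟩ <;> rcases abs_cases w.im with ⟨hy, _⟩ | ⟨hy, _⟩ <;>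
    rw [hx, hy] <;> ring_nf <;> linarith

theorem abs_im_lt_of_mem_qCell (hρ : 1 ≤ ρ) (hw : w ∈ qCell ρ) {b : ℝ} (hb : 0 < b)
    (hρb : (ρ ^ 2 - 1) * b ^ 2 + √3 * b = 1) : |w.im| < b := by
  have hρ₀ : 0 ≤ ρ := by linarith
  have h₁ := sq_sub_one_mul_sq_norm_lt_of_mem_qCell hρ₀ hw (m := 0) (n := 1) (by norm_num)
  have h₂ := sq_sub_one_mul_sq_norm_lt_of_mem_qCell hρ₀ hw (m := -1) (n := 1) (by norm_num)
  have h₃ := sq_sub_one_mul_sq_norm_lt_of_mem_qCell hρ₀ hw (m := 0) (n := -1) (by norm_num)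
  have h₄ := sq_sub_one_mul_sq_norm_lt_of_mem_qCell hρ₀ hw (m := 1) (n := -1) (by norm_num)
  push_cast at h₁ h₂ h₃ h₄
  have hk : 0 ≤ ρ ^ 2 - 1 := by nlinarith
  have hsq : w.im ^ 2 ≤ ‖w‖ ^ 2 := by
    simpa only [sq_abs] using pow_le_pow_left₀ (abs_nonneg _) (Complex.abs_im_le_norm w) 2
  refine abs_lt.mpr ⟨neg_lt.mp ?_, ?_⟩
  · exact lt_of_mul_sq_add_mul_eq_one hk (sqrt_nonneg 3) hb hρb (n := ‖w‖ ^ 2)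
      (by rwa [neg_sq]) (by linarith)
  · exact lt_of_mul_sq_add_mul_eq_one hk (sqrt_nonneg 3) hb hρb hsq (by linarith)

theorem qCell_subset_truncated_hexagon {b : ℝ} (hρ : 1 ≤ ρ) (hb : 0 < b)
    (hρb : (ρ ^ 2 - 1) * b ^ 2 + √3 * b = 1) :
    qCell ρ ⊆ {w : ℂ | w.re ∈ Ioo (-(1 + ρ)⁻¹) (1 + ρ)⁻¹ ∧
      |w.im| < min b ((2 * (1 + ρ)⁻¹ - |w.re|) / √3)} := by
  intro w hw
  refine ⟨abs_lt.mp (abs_re_lt_of_mem_qCell hρ hw), lt_min (abs_im_lt_of_mem_qCell hρ hw hb hρb)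
    ((lt_div_iff₀' (sqrt_pos.mpr (by norm_num))).mpr ?_)⟩
  linarith [abs_re_add_sqrt_three_mul_abs_im_lt_of_mem_qCell hρ hw]

end QCell

theorem Complex.volume_setOf_re_mem_abs_im_lt {s : Set ℝ} {g : ℝ → ℝ} (hs : MeasurableSet s)
    (hg : IntegrableOn g s) (hg₀ : ∀ x ∈ s, 0 ≤ g x) :
    volume {w : ℂ | w.re ∈ s ∧ |w.im| < g w.re} = ENNReal.ofReal (∫ x in s, 2 * g x) := by
  have hset : {w : ℂ | w.re ∈ s ∧ |w.im| < g w.re} =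
      Complex.measurableEquivRealProd ⁻¹' regionBetween (-g) g s := by
    ext w
    simp [regionBetween, abs_lt]
  rw [hset, Complex.volume_preserving_equiv_real_prod.measure_preimage_equiv,
    Measure.volume_eq_prod,
    volume_regionBetween_eq_integral hg.neg hg hs fun x hx => by simp [hg₀ x hx]]
  congr 2 with x
  simp only [Pi.sub_apply, Pi.neg_apply]
  ring

theorem intervalIntegral.integral_abs_symm {a : ℝ} (ha : 0 ≤ a) :
    ∫ x in (-a)..a, |x| = a ^ 2 := by
  have hpos : ∫ x in (0 : ℝ)..a, |x| = a ^ 2 / 2 := by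
    rw [integral_congr fun x hx => abs_of_nonneg (uIcc_of_le ha ▸ hx).1, integral_id]
    ring
  have hneg : ∫ x in (-a)..0, |x| = a ^ 2 / 2 := by
    have h := integral_comp_neg (a := 0) (b := a) (f := abs)
    simp only [abs_neg, neg_zero] at h
    rw [← h, hpos]
  rw [← integral_add_adjacent_intervals (continuous_abs.intervalIntegrable _ _)
    (continuous_abs.intervalIntegrable _ _), hneg, hpos]
  ring

theorem integral_hexagon_width {a : ℝ} (ha : 0 ≤ a) :
    ∫ x in (-a)..a, 2 * ((2 * a - |x|) / √3) = 2 * √3 * a ^ 2 := by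
  have h3 : √3 ^ 2 = 3 := sq_sqrt (by norm_num)
  simp only [mul_div_assoc', intervalIntegral.integral_div, intervalIntegral.integral_const_mul]
  rw [intervalIntegral.integral_sub intervalIntegrable_const
      (continuous_abs.intervalIntegrable _ _),
    intervalIntegral.integral_const, intervalIntegral.integral_abs_symm ha, smul_eq_mul]
  field_simp
  linear_combination (-a ^ 2) * h3

theorem volume_truncated_hexagon_lt {a b : ℝ} (hb : 0 < b) (hab : √3 * b < 2 * a) :
    volume {w : ℂ | w.re ∈ Ioo (-a) a ∧ |w.im| < min b ((2 * a - |w.re|) / √3)} <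
      ENNReal.ofReal (2 * √3 * a ^ 2) := by
  have h3 : 0 < √3 := sqrt_pos.mpr (by norm_num)
  have ha : 0 < a := by nlinarith
  have hg : Continuous fun x : ℝ => min b ((2 * a - |x|) / √3) := by fun_prop
  rw [Complex.volume_setOf_re_mem_abs_im_lt measurableSet_Ioo
      (hg.integrableOn_Icc.mono_set Ioo_subset_Icc_self) fun x hx => ?_,
    ← integral_Ioc_eq_integral_Ioo, ← intervalIntegral.integral_of_le (by linarith),
    ← integral_hexagon_width ha.le]
  · refine ENNReal.ofReal_lt_ofReal_iff'.mpr
      ⟨?_, by rw [integral_hexagon_width ha.le]; positivity⟩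
    refine intervalIntegral.integral_lt_integral_of_continuousOn_of_le_of_exists_lt (by linarith)
      (by fun_prop) (by fun_prop) (fun x _ => by gcongr; exact min_le_right _ _)
      ⟨0, by simpa using ha.le, ?_⟩
    simp only [abs_zero, sub_zero]
    gcongr
    exact min_lt_of_left_lt ((lt_div_iff₀ h3).mpr (by linarith))
  · exact le_min hb.le (div_nonneg (by linarith [abs_lt.mpr hx]) h3.le)

/-- The area of the Q cell of the origin in the unit triangular lattice (generated by `1` and
`1/2 + i·√3/2`) is less than `2√3/(1 + ρ)²` for `ρ > 1`. -/
theorem stmt_16 (ρ : ℝ) (hρ : 1 < ρ) :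
    volume {w : ℂ | ∀ m n : ℤ, (m, n) ≠ (0, 0) →
        ‖w - ((m : ℂ) * 1 + (n : ℂ) * (1 / 2 + Complex.I * (Real.sqrt 3 / 2 : ℝ)))‖
          > ρ * ‖w‖} <
      ENNReal.ofReal (2 * Real.sqrt 3 / (1 + ρ) ^ 2) := by
  have h3 : 0 < √3 := sqrt_pos.mpr (by norm_num)
  have hvertex : 1 < (ρ ^ 2 - 1) * (2 * (1 + ρ)⁻¹ / √3) ^ 2 + √3 * (2 * (1 + ρ)⁻¹ / √3) := by
    field_simp
    rw [sq_sqrt (by norm_num)]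
    nlinarith
  obtain ⟨b, ⟨hb, hbB⟩, hρb⟩ := exists_mem_Ioo_mul_sq_add_mul_eq_one (by positivity) hvertex
  calc volume (qCell ρ) ≤ _ := measure_mono (qCell_subset_truncated_hexagon hρ.le hb hρb)
    _ < ENNReal.ofReal (2 * √3 * ((1 + ρ)⁻¹) ^ 2) :=
      volume_truncated_hexagon_lt hb ((lt_div_iff₀' h3).mp hbB)
    _ = ENNReal.ofReal (2 * √3 / (1 + ρ) ^ 2) := by rw [inv_pow, div_eq_mul_inv]
end

section
/- For every u ∈ (0,1), log(1/u)·log(1/(1−u)) < 1/2. Equivalently, for every θ > 0 and u ∈ (0,1), the pessimistic-case stringency θ/(−log u) is greater than twice the optimistic-case stringency −θ·log(1−u). -/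
open Real


lemma aux_h : ∀ t ∈ Set.Ioo (0:ℝ) 1, 0 < Real.log t - t/2 + t⁻¹/2 := by
  intro t ht
  set f : ℝ → ℝ := fun x => Real.log x - x/2 + x⁻¹/2 with hf
  have hanti : StrictAntiOn f (Set.Ioc 0 1) := by
    apply strictAntiOn_of_deriv_neg (convex_Ioc 0 1)
    · apply ContinuousOn.add
      · exact (Real.continuousOn_log.mono (fun x hx => ne_of_gt hx.1)).sub
          (continuousOn_id.div_const 2)
      · exact (continuousOn_inv₀.mono (fun x hx => ne_of_gt hx.1)).div_const 2
    · intro x hx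
      rw [interior_Ioc] at hx
      have hx0 : x ≠ 0 := ne_of_gt hx.1
      have hd : HasDerivAt f (x⁻¹ - 1/2 + (-(x^2)⁻¹)/2) x :=
        ((Real.hasDerivAt_log hx0).sub ((hasDerivAt_id x).div_const 2)).add
          ((hasDerivAt_inv hx0).div_const 2)
      rw [hd.deriv]
      have h1 : x⁻¹ - 1/2 + (-(x^2)⁻¹)/2 = -((x-1)^2/(2*x^2)) := by
        field_simp; ring
      rw [h1]
      have hne : x - 1 ≠ 0 := sub_ne_zero.mpr (ne_of_lt hx.2)
      have h2 : (0:ℝ) < (x-1)^2 := lt_of_le_of_ne (sq_nonneg _) (Ne.symm (pow_ne_zero 2 hne))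
      have : (0:ℝ) < (x-1)^2/(2*x^2) := div_pos h2 (by positivity)
      linarith
  have h1 : f 1 = 0 := by simp [hf]
  have := hanti (Set.mem_Ioc.mpr ⟨ht.1, le_of_lt ht.2⟩)
    (Set.mem_Ioc.mpr ⟨one_pos, le_refl 1⟩) ht.2
  rw [h1] at this
  simpa [hf] using this

lemma aux_log_lt : ∀ x ∈ Set.Ioo (0:ℝ) 1, -Real.log x < (1 - x)/Real.sqrt x := by
  intro x hx
  set t := Real.sqrt x with htdef
  have ht0 : 0 < t := Real.sqrt_pos.mpr hx.1
  have ht1 : t < 1 := by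
    rw [htdef, show (1:ℝ) = Real.sqrt 1 by simp]
    exact Real.sqrt_lt_sqrt (le_of_lt hx.1) hx.2
  have hx_eq : x = t^2 := (Real.sq_sqrt (le_of_lt hx.1)).symm
  have hkey := aux_h t ⟨ht0, ht1⟩
  have hlog : Real.log x = 2 * Real.log t := by
    rw [hx_eq, Real.log_pow]; push_cast; ring
  rw [hlog, hx_eq]
  have hdiv : (1 - t^2)/t = t⁻¹ - t := by field_simp
  rw [hdiv]
  have hinv : t⁻¹/2 = t⁻¹/2 := rfl
  linarith

/-- For every `u ∈ (0,1)`, `log(1/u)·log(1/(1−u)) < 1/2`; equivalently, the pessimistic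
stringency `θ/(−log u)` exceeds twice the optimistic stringency `−θ·log(1−u)`. -/
theorem stmt_19 :
    ∀ u ∈ Set.Ioo (0 : ℝ) 1,
      Real.log (1 / u) * Real.log (1 / (1 - u)) < 1 / 2 ∧
        ∀ θ : ℝ, 0 < θ → θ / (-Real.log u) > 2 * (-θ * Real.log (1 - u)) := by
  intro u hu
  have hu0 : 0 < u := hu.1
  have hu1 : u < 1 := hu.2
  have hv : (1 - u) ∈ Set.Ioo (0:ℝ) 1 := ⟨by linarith, by linarith⟩
  have ha := aux_log_lt u hu
  have hb := aux_log_lt (1 - u) hv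
  have hsu : 0 < Real.sqrt u := Real.sqrt_pos.mpr hu0
  have hsv : 0 < Real.sqrt (1 - u) := Real.sqrt_pos.mpr hv.1
  have ha0 : 0 < -Real.log u := by
    have := Real.log_neg hu0 hu1; linarith
  have hb0 : 0 < -Real.log (1 - u) := by
    have := Real.log_neg hv.1 hv.2; linarith
  -- product bound
  have hprod : (-Real.log u) * (-Real.log (1 - u)) <
      ((1 - u)/Real.sqrt u) * ((1 - (1 - u))/Real.sqrt (1 - u)) := by
    apply mul_lt_mul'' ha hb (le_of_lt ha0) (le_of_lt hb0)
  have hrhs : ((1 - u)/Real.sqrt u) * ((1 - (1 - u))/Real.sqrt (1 - u))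
      = Real.sqrt (u * (1 - u)) := by
    rw [Real.sqrt_mul (le_of_lt hu0)]
    rw [div_mul_div_comm]
    rw [show (1 - (1 - u)) = u by ring]
    rw [div_eq_iff (by positivity)]
    rw [show Real.sqrt u * Real.sqrt (1-u) * (Real.sqrt u * Real.sqrt (1-u))
        = (Real.sqrt u * Real.sqrt u) * (Real.sqrt (1-u) * Real.sqrt (1-u)) by ring]
    rw [Real.mul_self_sqrt (le_of_lt hu0), Real.mul_self_sqrt (le_of_lt hv.1)]
    ring
  have hsq : Real.sqrt (u * (1 - u)) ≤ 1/2 := by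
    rw [show (1:ℝ)/2 = Real.sqrt (1/4) by
      rw [show (1:ℝ)/4 = (1/2)^2 by norm_num, Real.sqrt_sq (by norm_num)]]
    apply Real.sqrt_le_sqrt
    nlinarith [sq_nonneg (u - 1/2)]
  have hmain : (-Real.log u) * (-Real.log (1 - u)) < 1/2 := by
    rw [hrhs] at hprod; linarith
  have hlog1 : Real.log (1/u) = -Real.log u := by
    rw [one_div, Real.log_inv]
  have hlog2 : Real.log (1/(1-u)) = -Real.log (1-u) := by
    rw [one_div, Real.log_inv]
  constructor
  · rw [hlog1, hlog2]; exact hmain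
  · intro θ hθ
    have h1 : -Real.log (1 - u) < 1 / (2 * (-Real.log u)) := by
      rw [lt_div_iff₀ (by positivity)]
      nlinarith [sq_nonneg (u - 1/2)]
    have h2 : 2 * (θ * (-Real.log (1-u))) < 2 * (θ * (1 / (2 * (-Real.log u)))) := by
      apply mul_lt_mul_of_pos_left _ (by norm_num)
      exact mul_lt_mul_of_pos_left h1 hθ
    have hln : Real.log u ≠ 0 := by intro h; rw [h] at ha0; simp at ha0
    have h3 : 2 * (θ * (1 / (2 * (-Real.log u)))) = θ / (-Real.log u) := by
      field_simp
    calc 2 * (-θ * Real.log (1 - u)) = 2 * (θ * (-Real.log (1-u))) := by ring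
      _ < θ / (-Real.log u) := by rw [← h3]; exact h2
end
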